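/- Let K be a field, n ≥ 2, and let σ ∈ GL_n(K) be noncentral. Let σ' ∈ GL_{n+1}(K) be the block-diagonal matrix 1 ⊕ σ (a 1 in the top-left corner, σ in the bottom-right block, zeros elsewhere). Then there exist ρ, τ ∈ SL_{n+1}(K) such that t_{12}(1) = (ρ⁻¹σ'ρ)·(τ⁻¹(σ')⁻¹τ). (This is the finite-rank form of the stable result: in GL_∞(K), for every noncentral class C one has T ⊆ CC⁻¹, so m(C) = 2 whenever C ≠ T.) -/

import Mathlib

/-!
Let `e₀` be the first basis vector. The matrix `s = 1 ⊕ σ` fixes `e₀`, so for a row vector `x`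
with `x e₀ = 0` the commutator of the transvection `g = 1 + e₀ x` with `s` is again a transvection,
`1 + e₀ (x - x s⁻¹)`. As `σ` is not scalar, `σ⁻¹ ≠ 1`, so `x = (0, v)` can be chosen with
`w = v - v σ⁻¹ ≠ 0`. Since `n ≥ 2`, `w` is the first row of some `d ∈ SL_n` (a second row absorbs
the determinant), and `c = 1 ⊕ d` conjugates `1 + e₀ (0, w)` to `t₁₂(1)`. Hence `ρ = (c g)⁻¹` and
`τ = c⁻¹` work.
-/

open Matrix

/-- The block-diagonal matrix `1 ⊕ σ` of size `(n+1) × (n+1)`: a `1` in the top-left corner,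
`σ` in the bottom-right `n × n` block, and zeros elsewhere. -/
def oneOplus {n : ℕ} {K : Type*} [Field K] (σ : Matrix (Fin n) (Fin n) K) :
    Matrix (Fin (n + 1)) (Fin (n + 1)) K :=
  Matrix.of fun i j =>
    if hi : i = 0 then (if j = 0 then 1 else 0)
    else if hj : j = 0 then 0 else σ (i.pred hi) (j.pred hj)

namespace Matrix

section RankOne

variable {m R : Type*} [Fintype m] [DecidableEq m] [CommRing R]

theorem det_one_add_vecMulVec (u v : m → R) : (1 + vecMulVec u v).det = 1 + v ⬝ᵥ u := by
  rw [vecMulVec_eq Unit, det_one_add_replicateCol_mul_replicateRow]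

theorem one_add_vecMulVec_mul_one_add_vecMulVec {u v : m → R} (h : v ⬝ᵥ u = 0) (w : m → R) :
    (1 + vecMulVec u v) * (1 + vecMulVec u w) = 1 + vecMulVec u (v + w) := by
  rw [mul_add, add_mul, add_mul, vecMulVec_mul_vecMulVec, h, zero_smul, vecMulVec_add]
  simp only [one_mul, mul_one, vecMulVec_zero, add_zero]
  abel

theorem inv_one_add_vecMulVec {u v : m → R} (h : v ⬝ᵥ u = 0) :
    (1 + vecMulVec u v)⁻¹ = 1 + vecMulVec u (-v) :=
  inv_eq_right_inv <| by
    rw [one_add_vecMulVec_mul_one_add_vecMulVec h, add_neg_cancel, vecMulVec_zero, add_zero]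

theorem conj_one_add_vecMulVec {c : Matrix m m R} (hc : IsUnit c.det) (u v : m → R) :
    c * (1 + vecMulVec u v) * c⁻¹ = 1 + vecMulVec (c *ᵥ u) (v ᵥ* c⁻¹) := by
  rw [mul_add, add_mul, mul_one, mul_nonsing_inv c hc, mul_vecMulVec, vecMulVec_mul]

theorem commutator_one_add_vecMulVec {s : Matrix m m R} (hs : IsUnit s.det) {u v : m → R}
    (hsu : s *ᵥ u = u) (h : v ⬝ᵥ u = 0) :
    (1 + vecMulVec u v) * s * (1 + vecMulVec u v)⁻¹ * s⁻¹ = 1 + vecMulVec u (v - v ᵥ* s⁻¹) := by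
  rw [inv_one_add_vecMulVec h, Matrix.mul_assoc _ s, Matrix.mul_assoc,
    conj_one_add_vecMulVec hs, hsu, one_add_vecMulVec_mul_one_add_vecMulVec h, neg_vecMul,
    sub_eq_add_neg]

theorem conj_mul_conj_inv_eq_conj_commutator {c g : Matrix m m R} (hc : IsUnit c.det) (hg : IsUnit g.det)
    (s : Matrix m m R) :
    ((c * g)⁻¹)⁻¹ * s * (c * g)⁻¹ * ((c⁻¹)⁻¹ * s⁻¹ * c⁻¹) = c * (g * s * g⁻¹ * s⁻¹) * c⁻¹ := by
  rw [nonsing_inv_nonsing_inv _ (by rw [det_mul]; exact hc.mul hg), nonsing_inv_nonsing_inv _ hc,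
    Matrix.mul_inv_rev]
  simp only [Matrix.mul_assoc, nonsing_inv_mul_cancel_left _ _ hc]

end RankOne

theorem exists_det_eq_one_and_row_eq {ι K : Type*} [Fintype ι] [DecidableEq ι] [Field K] {i j : ι}
    (hij : i ≠ j) {w : ι → K} (hw : w ≠ 0) : ∃ d : Matrix ι ι K, d.det = 1 ∧ d i = w := by
  obtain ⟨k, hk⟩ : ∃ k, w k ≠ 0 := Function.ne_iff.1 hw
  set A := ((1 : Matrix ι ι K).updateRow k w).submatrix (Equiv.swap i k) id
  have hA : A.det ≠ 0 := by
    rw [det_permute, ← cramer_transpose_apply, transpose_one, cramer_one, Equiv.Perm.sign_swap']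
    split_ifs <;> simp [hk]
  refine ⟨A.updateRow j ((A.det)⁻¹ • A j), ?_, ?_⟩
  · rw [det_updateRow_smul, updateRow_eq_self, inv_mul_cancel₀ hA]
  · ext x
    simp [updateRow_ne hij, A]

theorem transvection_zero_succ_one {n : ℕ} {R : Type*} [CommRing R] (k : Fin n) :
    transvection 0 k.succ (1 : R) = 1 + vecMulVec (Pi.single 0 1) (vecCons 0 (Pi.single k 1)) := by
  rw [transvection, single_eq_single_vecMulVec_single]
  congr
  ext j
  refine Fin.cases ?_ (fun j => ?_) j <;> simp [Pi.single_apply, Fin.succ_ne_zero]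

end Matrix

section OneOplus

variable {n : ℕ} {K : Type*} [Field K]

theorem det_oneOplus (a : Matrix (Fin n) (Fin n) K) : (oneOplus a).det = a.det := by
  rw [det_succ_row_zero, Fin.sum_univ_succ]
  simp [oneOplus, Fin.succ_ne_zero]
  rfl

theorem oneOplus_mul (a b : Matrix (Fin n) (Fin n) K) :
    oneOplus a * oneOplus b = oneOplus (a * b) := by
  ext i j
  simp only [mul_apply, oneOplus, of_apply, Fin.sum_univ_succ]
  by_cases hi : i = 0 <;> by_cases hj : j = 0 <;>
    simp [hi, hj, Fin.succ_ne_zero]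

theorem oneOplus_one : oneOplus (1 : Matrix (Fin n) (Fin n) K) = 1 := by
  ext i j
  by_cases hi : i = 0 <;> by_cases hj : j = 0 <;>
    simp [oneOplus, hi, hj, one_apply, Fin.pred_inj, eq_comm]

theorem inv_oneOplus {a : Matrix (Fin n) (Fin n) K} (ha : IsUnit a.det) :
    (oneOplus a)⁻¹ = oneOplus a⁻¹ :=
  inv_eq_right_inv <| by rw [oneOplus_mul, mul_nonsing_inv a ha, oneOplus_one]

theorem oneOplus_mulVec_single_zero (a : Matrix (Fin n) (Fin n) K) :
    oneOplus a *ᵥ Pi.single 0 1 = Pi.single 0 1 := by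
  ext i
  refine Fin.cases ?_ (fun i => ?_) i <;> simp [oneOplus, Fin.succ_ne_zero]

theorem cons_zero_vecMul_oneOplus (v : Fin n → K) (a : Matrix (Fin n) (Fin n) K) :
    vecCons 0 v ᵥ* oneOplus a = vecCons 0 (v ᵥ* a) := by
  ext j
  refine Fin.cases ?_ (fun j => ?_) j <;>
    simp [vecMul, dotProduct, Fin.sum_univ_succ, oneOplus, Fin.succ_ne_zero]

end OneOplus

theorem stmt15 {n : ℕ} (hn : 2 ≤ n) {K : Type*} [Field K]
    (σ : Matrix (Fin n) (Fin n) K) (hσ : IsUnit σ.det)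
    (hnoncentral : ∀ a : K, σ ≠ a • (1 : Matrix (Fin n) (Fin n) K)) :
    ∃ ρ τ : Matrix (Fin (n + 1)) (Fin (n + 1)) K, ρ.det = 1 ∧ τ.det = 1 ∧
      Matrix.transvection (⟨0, by omega⟩ : Fin (n + 1)) (⟨1, by omega⟩ : Fin (n + 1)) (1 : K)
        = (ρ⁻¹ * oneOplus σ * ρ) * (τ⁻¹ * (oneOplus σ)⁻¹ * τ) := by
  have hσ_inv : σ⁻¹ ≠ 1 := fun h =>
    hnoncentral 1 (by rw [one_smul, ← nonsing_inv_nonsing_inv σ hσ, h, inv_one])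
  obtain ⟨v, hv⟩ : ∃ v, v ᵥ* σ⁻¹ ≠ v := by simpa [ext_iff_vecMul] using hσ_inv
  set i₀ : Fin n := ⟨0, by omega⟩
  obtain ⟨d, hd, hd0⟩ := exists_det_eq_one_and_row_eq (i := i₀) (j := ⟨1, by omega⟩)
    (by simp [i₀, Fin.ext_iff]) (sub_ne_zero.2 hv.symm)
  have hd' : IsUnit d.det := hd ▸ isUnit_one
  have hc : IsUnit (oneOplus d).det := by rwa [det_oneOplus]
  set g : Matrix (Fin (n + 1)) (Fin (n + 1)) K := 1 + vecMulVec (Pi.single 0 1) (vecCons 0 v)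
  have hg : g.det = 1 := by rw [det_one_add_vecMulVec]; simp
  have hcomm : g * oneOplus σ * g⁻¹ * (oneOplus σ)⁻¹
      = 1 + vecMulVec (Pi.single 0 1) (vecCons 0 (d i₀)) := by
    rw [commutator_one_add_vecMulVec (by rwa [det_oneOplus]) (oneOplus_mulVec_single_zero σ)
      (by simp), inv_oneOplus hσ, cons_zero_vecMul_oneOplus, cons_sub_cons, sub_zero, hd0]
  have hrow : d i₀ ᵥ* d⁻¹ = Pi.single i₀ 1 := by
    rw [← row_apply' d, ← single_one_vecMul, vecMul_vecMul, mul_nonsing_inv _ hd', vecMul_one]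
  refine ⟨(oneOplus d * g)⁻¹, (oneOplus d)⁻¹, ?_, ?_, ?_⟩
  · simp [det_nonsing_inv, det_oneOplus, hd, hg]
  · simp [det_nonsing_inv, det_oneOplus, hd]
  rw [conj_mul_conj_inv_eq_conj_commutator hc (hg ▸ isUnit_one), hcomm, conj_one_add_vecMulVec hc,
    oneOplus_mulVec_single_zero, inv_oneOplus hd', cons_zero_vecMul_oneOplus, hrow]
  exact transvection_zero_succ_one i₀
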